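/- Let 𝓐=(A,δ^A,σ^A,τ^A) and 𝓑=(B,δ^B,σ^B,τ^B) be fuzzy automata over a complete residuated lattice 𝓛 and alphabet X, and let φ be a forward bisimulation between 𝓐 and 𝓑. Then: (A) φ∘φ⁻¹ is a forward bisimulation on 𝓐, φ⁻¹∘φ is a forward bisimulation on 𝓑, and for every x∈X the inequalities φ∘φ⁻¹∘δ^A_x ≤ φ∘δ^B_x∘φ⁻¹ ≤ δ^A_x∘φ∘φ⁻¹ and φ⁻¹∘φ∘δ^B_x ≤ φ⁻¹∘δ^A_x∘φ ≤ δ^B_x∘φ⁻¹∘φ hold. (B) If moreover φ is a uniform fuzzy relation, then φ∘φ⁻¹ is a forward bisimulation fuzzy equivalence relation on 𝓐 and φ⁻¹∘φ is a forward bisimulation fuzzy equivalence relation on 𝓑. -/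
import Mathlib


universe u

/-- A complete residuated lattice: a complete lattice with a commutative monoid
structure whose unit is the top element, together with a residuum operation
forming an adjoint pair with the multiplication. -/
class CompleteResiduatedLattice (L : Type*) extends CompleteLattice L, CommMonoid L where
  /-- the residuum operation `→` -/
  res : L → L → L
  /-- the adjunction property -/
  adjunction : ∀ x y z : L, x * y ≤ z ↔ x ≤ res y z
  /-- the multiplicative unit `1` is the greatest element -/
  one_eq_top : (1 : L) = ⊤

namespace FuzzyAutomataBisim

/-- A fuzzy automaton over `L` and alphabet `X`, with state set `A`. -/
structure FuzzyAutomaton (L : Type*) [CompleteResiduatedLattice L] (X A : Type*) where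
  δ : A → X → A → L
  σ : A → L
  τ : A → L

variable {L X A B C : Type*} [CompleteResiduatedLattice L]

/-- biresiduum `x ↔ y = (x → y) ⊓ (y → x)` -/
def bires (x y : L) : L :=
  CompleteResiduatedLattice.res x y ⊓ CompleteResiduatedLattice.res y x

/-- inverse of a fuzzy relation -/
def inv (φ : A → B → L) : B → A → L := fun b a => φ a b

/-- composition of fuzzy relations -/
def rcomp (φ : A → B → L) (ψ : B → C → L) : A → C → L := fun a c => ⨆ b, φ a b * ψ b c

/-- composition of a fuzzy set with a fuzzy relation -/
def scomp (f : A → L) (φ : A → B → L) : B → L := fun b => ⨆ a, f a * φ a b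

/-- composition of a fuzzy relation with a fuzzy set -/
def rscomp (φ : A → B → L) (g : B → L) : A → L := fun a => ⨆ b, φ a b * g b

/-- degree of overlapping of two fuzzy sets -/
def sdot (f g : A → L) : L := ⨆ a, f a * g a

/-- kernel `E_A^φ` of a fuzzy relation -/
def ker (φ : A → B → L) : A → A → L := fun a₁ a₂ => ⨅ b, bires (φ a₁ b) (φ a₂ b)

/-- co-kernel `E_B^φ` of a fuzzy relation -/
def coker (φ : A → B → L) : B → B → L := fun b₁ b₂ => ⨅ a, bires (φ a b₁) (φ a b₂)

/-- `φ` is an `L`-function -/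
def IsLFun (φ : A → B → L) : Prop := ∀ a, ∃ b, φ a b = 1

/-- `φ` is surjective, i.e. `φ⁻¹` is an `L`-function -/
def IsSurj (φ : A → B → L) : Prop := ∀ b, ∃ a, φ a b = 1

/-- `φ` is a partial fuzzy function: `φ ∘ φ⁻¹ ∘ φ ≤ φ` -/
def IsPFF (φ : A → B → L) : Prop := rcomp (rcomp φ (inv φ)) φ ≤ φ

/-- `φ` is a uniform fuzzy relation: a partial fuzzy function that is a
surjective `L`-function -/
def IsUniform (φ : A → B → L) : Prop := IsPFF φ ∧ IsLFun φ ∧ IsSurj φ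

/-- the set of crisp descriptions of `φ` -/
def CR (φ : A → B → L) : Set (A → B) := {ψ | ∀ a, φ a (ψ a) = 1}

/-- `ψ : A → B` is `F`-surjective -/
def SurjMod (F : B → B → L) (ψ : A → B) : Prop := ∀ b, ∃ a, F (ψ a) b = 1

/-- fuzzy equivalence relation -/
structure IsFuzzyEquiv (E : A → A → L) : Prop where
  refl : ∀ a, E a a = 1
  symm : ∀ a b, E a b = E b a
  trans : ∀ a b c, E a b * E b c ≤ E a c

/-- fuzzy equality -/
def IsFuzzyEquality (E : A → A → L) : Prop :=
  IsFuzzyEquiv E ∧ ∀ a b, E a b = 1 → a = b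

/-- the factor set `A/E = {E_a : a ∈ A}` -/
abbrev FactorSet (E : A → A → L) := {f : A → L // ∃ a, E a = f}

/-- the class `E_a` as an element of `A/E` -/
def toClass (E : A → A → L) (a : A) : FactorSet E := ⟨E a, a, rfl⟩

/-- a chosen representative of a class -/
noncomputable def rep {E : A → A → L} (c : FactorSet E) : A := c.2.choose

/-- the fuzzy relation `Ẽ` on `A/E` -/
noncomputable def tildeRel (E : A → A → L) : FactorSet E → FactorSet E → L :=
  fun c c' => E (rep c) (rep c')

open Classical in
/-- a chosen crisp description of `φ` -/
noncomputable def crispDesc [Nonempty B] (φ : A → B → L) : A → B :=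
  fun a => if h : ∃ b, φ a b = 1 then h.choose else Classical.arbitrary B

/-- the induced map `φ̃ : A/E_A^φ → B/E_B^φ`, `φ̃(E_a) = F_{ψ(a)}` -/
noncomputable def tilde [Nonempty B] (φ : A → B → L) :
    FactorSet (ker φ) → FactorSet (coker φ) :=
  fun c => toClass (coker φ) (crispDesc φ (rep c))

/-- the fuzzy transition relation `δ_x` -/
def FuzzyAutomaton.δx (M : FuzzyAutomaton L X A) (x : X) : A → A → L := fun a b => M.δ a x b

open Classical in
/-- transitions extended to words -/
noncomputable def deltaWord (M : FuzzyAutomaton L X A) : List X → A → A → L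
  | [] => fun a b => if a = b then (1 : L) else ⊥
  | x :: u => rcomp (M.δx x) (deltaWord M u)

/-- the fuzzy language recognized by `M` : `L(M)(u) = σ ∘ δ_u ∘ τ` -/
noncomputable def lang (M : FuzzyAutomaton L X A) (u : List X) : L :=
  sdot (scomp M.σ (deltaWord M u)) M.τ

/-- forward simulation -/
def IsForwardSim (MA : FuzzyAutomaton L X A) (MB : FuzzyAutomaton L X B)
    (φ : A → B → L) : Prop :=
  MA.σ ≤ scomp MB.σ (inv φ) ∧
  (∀ x, rcomp (inv φ) (MA.δx x) ≤ rcomp (MB.δx x) (inv φ)) ∧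
  rscomp (inv φ) MA.τ ≤ MB.τ

/-- backward simulation -/
def IsBackwardSim (MA : FuzzyAutomaton L X A) (MB : FuzzyAutomaton L X B)
    (φ : A → B → L) : Prop :=
  scomp MA.σ φ ≤ MB.σ ∧
  (∀ x, rcomp (MA.δx x) φ ≤ rcomp φ (MB.δx x)) ∧
  MA.τ ≤ rscomp φ MB.τ

/-- forward bisimulation -/
def IsForwardBisim (MA : FuzzyAutomaton L X A) (MB : FuzzyAutomaton L X B)
    (φ : A → B → L) : Prop :=
  IsForwardSim MA MB φ ∧ IsForwardSim MB MA (inv φ)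

/-- backward bisimulation -/
def IsBackwardBisim (MA : FuzzyAutomaton L X A) (MB : FuzzyAutomaton L X B)
    (φ : A → B → L) : Prop :=
  IsBackwardSim MA MB φ ∧ IsBackwardSim MB MA (inv φ)

/-- backward-forward bisimulation -/
def IsBFBisim (MA : FuzzyAutomaton L X A) (MB : FuzzyAutomaton L X B)
    (φ : A → B → L) : Prop :=
  IsBackwardSim MA MB φ ∧ IsForwardSim MB MA (inv φ)

/-- forward-backward bisimulation -/
def IsFBBisim (MA : FuzzyAutomaton L X A) (MB : FuzzyAutomaton L X B)
    (φ : A → B → L) : Prop :=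
  IsForwardSim MA MB φ ∧ IsBackwardSim MB MA (inv φ)

/-- isomorphism of fuzzy automata -/
def IsIso (MA : FuzzyAutomaton L X A) (MB : FuzzyAutomaton L X B) (h : A → B) : Prop :=
  Function.Bijective h ∧
  (∀ (a₁ : A) (x : X) (a₂ : A), MA.δ a₁ x a₂ = MB.δ (h a₁) x (h a₂)) ∧
  (∀ a, MA.σ a = MB.σ (h a)) ∧
  (∀ a, MA.τ a = MB.τ (h a))

/-- the factor fuzzy automaton `𝓐/E` -/
noncomputable def factorAut (M : FuzzyAutomaton L X A) (E : A → A → L) :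
    FuzzyAutomaton L X (FactorSet E) where
  δ := fun c x c' => rcomp (rcomp E (M.δx x)) E (rep c) (rep c')
  σ := fun c => scomp M.σ E (rep c)
  τ := fun c => rscomp E M.τ (rep c)

/-- the natural fuzzy relation `φ(a₁, E_{a₂}) = E(a₁,a₂)` between `A` and `A/E` -/
def natRel (E : A → A → L) : A → FactorSet E → L := fun a c => c.1 a

/-- the fuzzy relation `G/E` on `A/E` -/
noncomputable def quotRel (E G : A → A → L) : FactorSet E → FactorSet E → L :=
  fun c c' => G (rep c) (rep c')

/-- the fuzzy relation `φ(a₁, E_{a₂}) = G(a₁,a₂)` between `A` and `A/E` -/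
noncomputable def quotNatRel (E G : A → A → L) : A → FactorSet E → L :=
  fun a c => G a (rep c)

/-- UFB-equivalence of fuzzy automata -/
def UFBEquiv (MA : FuzzyAutomaton L X A) (MB : FuzzyAutomaton L X B) : Prop :=
  ∃ φ : A → B → L, IsUniform φ ∧ IsForwardBisim MA MB φ

section Aux

variable {L A B C D X : Type*} [CompleteResiduatedLattice L]

lemma le_one' (x : L) : x ≤ 1 := by
  rw [CompleteResiduatedLattice.one_eq_top]; exact le_top

lemma mul_mono_left' {a b : L} (h : a ≤ b) (c : L) : a * c ≤ b * c := by
  have hb : b ≤ CompleteResiduatedLattice.res c (b * c) :=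
    (CompleteResiduatedLattice.adjunction _ _ _).mp le_rfl
  exact (CompleteResiduatedLattice.adjunction _ _ _).mpr (h.trans hb)

lemma mul_mono' {a b c d : L} (h1 : a ≤ b) (h2 : c ≤ d) : a * c ≤ b * d := by
  calc a * c ≤ b * c := mul_mono_left' h1 c
    _ = c * b := mul_comm _ _
    _ ≤ d * b := mul_mono_left' h2 b
    _ = b * d := mul_comm _ _

lemma iSup_mul' {ι : Sort*} (f : ι → L) (y : L) : (⨆ i, f i) * y = ⨆ i, f i * y := by
  apply le_antisymm
  · refine (CompleteResiduatedLattice.adjunction _ _ _).mpr (iSup_le fun i => ?_)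
    exact (CompleteResiduatedLattice.adjunction _ _ _).mp (le_iSup (fun i => f i * y) i)
  · exact iSup_le fun i => mul_mono_left' (le_iSup f i) y

lemma mul_iSup' {ι : Sort*} (x : L) (f : ι → L) : (x * ⨆ i, f i) = ⨆ i, x * f i := by
  rw [mul_comm, iSup_mul']
  exact iSup_congr fun i => mul_comm _ _

lemma rcomp_assoc (φ : A → B → L) (ψ : B → C → L) (χ : C → D → L) :
    rcomp (rcomp φ ψ) χ = rcomp φ (rcomp ψ χ) := by
  funext a d
  simp only [rcomp, iSup_mul', mul_iSup']
  rw [iSup_comm]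
  exact iSup_congr fun b => iSup_congr fun c => mul_assoc _ _ _

lemma rcomp_mono {φ φ' : A → B → L} {ψ ψ' : B → C → L} (h1 : φ ≤ φ') (h2 : ψ ≤ ψ') :
    rcomp φ ψ ≤ rcomp φ' ψ' :=
  fun a c => iSup_mono fun b => mul_mono' (h1 a b) (h2 b c)

lemma inv_inv' (φ : A → B → L) : inv (inv φ) = φ := rfl

lemma inv_mono {φ ψ : A → B → L} (h : φ ≤ ψ) : inv φ ≤ inv ψ :=
  fun b a => h a b

lemma inv_rcomp (φ : A → B → L) (ψ : B → C → L) :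
    inv (rcomp φ ψ) = rcomp (inv ψ) (inv φ) := by
  funext c a
  exact iSup_congr fun b => mul_comm _ _

lemma scomp_assoc (f : A → L) (φ : A → B → L) (ψ : B → C → L) :
    scomp (scomp f φ) ψ = scomp f (rcomp φ ψ) := by
  funext c
  simp only [scomp, rcomp, iSup_mul', mul_iSup']
  rw [iSup_comm]
  exact iSup_congr fun a => iSup_congr fun b => mul_assoc _ _ _

lemma scomp_mono {f g : A → L} {φ ψ : A → B → L} (h1 : f ≤ g) (h2 : φ ≤ ψ) :
    scomp f φ ≤ scomp g ψ :=
  fun b => iSup_mono fun a => mul_mono' (h1 a) (h2 a b)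

lemma rscomp_assoc (φ : A → B → L) (ψ : B → C → L) (g : C → L) :
    rscomp (rcomp φ ψ) g = rscomp φ (rscomp ψ g) := by
  funext a
  simp only [rscomp, rcomp, iSup_mul', mul_iSup']
  rw [iSup_comm]
  exact iSup_congr fun b => iSup_congr fun c => mul_assoc _ _ _

lemma rscomp_mono {φ ψ : A → B → L} {f g : B → L} (h1 : φ ≤ ψ) (h2 : f ≤ g) :
    rscomp φ f ≤ rscomp ψ g :=
  fun a => iSup_mono fun b => mul_mono' (h1 a b) (h2 b)

lemma inv_comp_inv (φ : A → B → L) :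
    inv (rcomp φ (inv φ)) = rcomp φ (inv φ) := by
  rw [inv_rcomp, inv_inv']

end Aux

/-- forward bisimulations and the relations `φ∘φ⁻¹`, `φ⁻¹∘φ` -/
theorem forwardBisim_comp_inv {L X A B : Type*} [CompleteResiduatedLattice L]
    [Nonempty A] [Nonempty B]
    (MA : FuzzyAutomaton L X A) (MB : FuzzyAutomaton L X B)
    (φ : A → B → L) (h : IsForwardBisim MA MB φ) :
    (IsForwardBisim MA MA (rcomp φ (inv φ)) ∧
     IsForwardBisim MB MB (rcomp (inv φ) φ) ∧
     (∀ x : X,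
        rcomp (rcomp φ (inv φ)) (MA.δx x) ≤ rcomp (rcomp φ (MB.δx x)) (inv φ) ∧
        rcomp (rcomp φ (MB.δx x)) (inv φ) ≤ rcomp (MA.δx x) (rcomp φ (inv φ)) ∧
        rcomp (rcomp (inv φ) φ) (MB.δx x) ≤ rcomp (rcomp (inv φ) (MA.δx x)) φ ∧
        rcomp (rcomp (inv φ) (MA.δx x)) φ ≤ rcomp (MB.δx x) (rcomp (inv φ) φ))) ∧
    (IsUniform φ →
      (IsFuzzyEquiv (rcomp φ (inv φ)) ∧ IsForwardBisim MA MA (rcomp φ (inv φ))) ∧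
      (IsFuzzyEquiv (rcomp (inv φ) φ) ∧ IsForwardBisim MB MB (rcomp (inv φ) φ))) := by
  obtain ⟨⟨hσ, hδ, hτ⟩, hσ', hδ', hτ'⟩ := h
  have hinvE : inv (rcomp φ (inv φ)) = rcomp φ (inv φ) := inv_comp_inv φ
  have hinvF : inv (rcomp (inv φ) φ) = rcomp (inv φ) φ := inv_comp_inv (inv φ)
  have chA1 : ∀ x : X, rcomp (rcomp φ (inv φ)) (MA.δx x) ≤ rcomp (rcomp φ (MB.δx x)) (inv φ) := by
    intro x
    rw [rcomp_assoc, rcomp_assoc]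
    exact rcomp_mono le_rfl (hδ x)
  have chA2 : ∀ x : X, rcomp (rcomp φ (MB.δx x)) (inv φ) ≤ rcomp (MA.δx x) (rcomp φ (inv φ)) := by
    intro x
    rw [← rcomp_assoc]
    exact rcomp_mono (hδ' x) le_rfl
  have chB1 : ∀ x : X, rcomp (rcomp (inv φ) φ) (MB.δx x) ≤ rcomp (rcomp (inv φ) (MA.δx x)) φ := by
    intro x
    rw [rcomp_assoc, rcomp_assoc]
    exact rcomp_mono le_rfl (hδ' x)
  have chB2 : ∀ x : X, rcomp (rcomp (inv φ) (MA.δx x)) φ ≤ rcomp (MB.δx x) (rcomp (inv φ) φ) := by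
    intro x
    rw [← rcomp_assoc]
    exact rcomp_mono (hδ x) le_rfl
  have simE : IsForwardSim MA MA (rcomp φ (inv φ)) := by
    refine ⟨?_, ?_, ?_⟩
    · rw [hinvE]
      calc MA.σ ≤ scomp MB.σ (inv φ) := hσ
        _ ≤ scomp (scomp MA.σ φ) (inv φ) := scomp_mono hσ' le_rfl
        _ = scomp MA.σ (rcomp φ (inv φ)) := scomp_assoc _ _ _
    · intro x
      rw [hinvE]
      exact (chA1 x).trans (chA2 x)
    · rw [hinvE, rscomp_assoc]
      calc rscomp φ (rscomp (inv φ) MA.τ) ≤ rscomp φ MB.τ := rscomp_mono le_rfl hτ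
        _ ≤ MA.τ := hτ'
  have simF : IsForwardSim MB MB (rcomp (inv φ) φ) := by
    refine ⟨?_, ?_, ?_⟩
    · rw [hinvF]
      calc MB.σ ≤ scomp MA.σ φ := hσ'
        _ ≤ scomp (scomp MB.σ (inv φ)) φ := scomp_mono hσ le_rfl
        _ = scomp MB.σ (rcomp (inv φ) φ) := scomp_assoc _ _ _
    · intro x
      rw [hinvF]
      exact (chB1 x).trans (chB2 x)
    · rw [hinvF, rscomp_assoc]
      calc rscomp (inv φ) (rscomp φ MB.τ) ≤ rscomp (inv φ) MA.τ := rscomp_mono le_rfl hτ'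
        _ ≤ MB.τ := hτ
  have bisimE : IsForwardBisim MA MA (rcomp φ (inv φ)) := ⟨simE, by rw [hinvE]; exact simE⟩
  have bisimF : IsForwardBisim MB MB (rcomp (inv φ) φ) := ⟨simF, by rw [hinvF]; exact simF⟩
  refine ⟨⟨bisimE, bisimF, fun x => ⟨chA1 x, chA2 x, chB1 x, chB2 x⟩⟩, ?_⟩
  rintro ⟨hPFF, hLf, hSurj⟩
  have hPFF' : rcomp (inv φ) (rcomp φ (inv φ)) ≤ inv φ := by
    have h2 := inv_mono hPFF
    rwa [inv_rcomp, inv_comp_inv] at h2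
  have hEE : rcomp (rcomp φ (inv φ)) (rcomp φ (inv φ)) ≤ rcomp φ (inv φ) := by
    rw [← rcomp_assoc]
    exact rcomp_mono hPFF le_rfl
  have hFF : rcomp (rcomp (inv φ) φ) (rcomp (inv φ) φ) ≤ rcomp (inv φ) φ := by
    rw [← rcomp_assoc, rcomp_assoc (inv φ) φ (inv φ)]
    exact rcomp_mono hPFF' le_rfl
  have equivE : IsFuzzyEquiv (rcomp φ (inv φ)) := by
    refine ⟨fun a => ?_, fun a b => ?_, fun a b c => ?_⟩
    · obtain ⟨b, hb⟩ := hLf a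
      refine le_antisymm (le_one' _) ?_
      calc (1 : L) = φ a b * φ a b := by rw [hb, one_mul]
        _ ≤ ⨆ b', φ a b' * inv φ b' a := le_iSup (fun b' => φ a b' * inv φ b' a) b
    · exact iSup_congr fun b' => mul_comm (φ a b') (φ b b')
    · exact le_trans
        (le_iSup (fun b' => rcomp φ (inv φ) a b' * rcomp φ (inv φ) b' c) b) (hEE a c)
  have equivF : IsFuzzyEquiv (rcomp (inv φ) φ) := by
    refine ⟨fun b => ?_, fun b b' => ?_, fun a b c => ?_⟩
    · obtain ⟨a, ha⟩ := hSurj b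
      refine le_antisymm (le_one' _) ?_
      calc (1 : L) = φ a b * φ a b := by rw [ha, one_mul]
        _ ≤ ⨆ a', inv φ b a' * φ a' b := le_iSup (fun a' => inv φ b a' * φ a' b) a
    · exact iSup_congr fun a => mul_comm (φ a b) (φ a b')
    · exact le_trans
        (le_iSup (fun b' => rcomp (inv φ) φ a b' * rcomp (inv φ) φ b' c) b) (hFF a c)
  exact ⟨⟨equivE, bisimE⟩, ⟨equivF, bisimF⟩⟩


end FuzzyAutomataBisim
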